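/- arXiv:2505.18433 — 6 statements merged into one kernel-verified Lean document; each statement's English description precedes it below -/
import Mathlib

section
/- (Policy Gradient Theorem, discounted finite MDP) In a finite discounted MDP with a parameterized policy whose entries π_θ(a|s) are continuously differentiable in θ ∈ ℝⁿ, the objective J(θ) is differentiable in θ and its gradient satisfies ∇_θ J(θ) = Σ_{s∈S} η_θ(s) Σ_{a∈A} ∇_θ π_θ(a|s) · Q_θ(s,a), where η_θ(s) := Σ_{t=0}^∞ γ^t (P_θ^t)(s₀,s) is the discounted visitation measure of the policy-induced state chain P_θ. -/
/-!
A row-stochastic `P_θ` has `ℓ∞` operator norm at most `1`, so `‖γ P_θ‖ < 1` and the Neumann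
series gives `R_θ := (1 - γ P_θ)⁻¹ = Σ_t γ^t P_θ^t`. Thus `η_θ = R_θ(s₀, ·)` and
`J(θ) = (R_θ v_θ)(s₀)` with `v_θ(s) = Σ_a π_θ(a|s) r(s,a)`, while the Bellman equation says that
`V_θ := Σ_a π_θ Q_θ` solves `V_θ = v_θ + γ P_θ V_θ`, i.e. `V_θ = R_θ v_θ`. Differentiating the
inverse, `dR = γ R (dP) R`, so `dJ = (R (dv + γ (dP) V))(s₀)`, and
`(dv + γ (dP) V)(s) = Σ_a dπ(a|s) Q(s,a)`.
-/

open scoped Matrix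
attribute [local instance] Matrix.linftyOpNormedRing Matrix.linftyOpNormedAlgebra

theorem HasFDerivAt.ringInverse {𝕜 E R : Type*} [NontriviallyNormedField 𝕜]
    [NormedAddCommGroup E] [NormedSpace 𝕜 E] [NormedRing R] [HasSummableGeomSeries R]
    [NormedAlgebra 𝕜 R] {f : E → R} {f' : E →L[𝕜] R} {x : E}
    (hf : HasFDerivAt f f' x) (hx : IsUnit (f x)) :
    HasFDerivAt (fun y => Ring.inverse (f y))
      (-(ContinuousLinearMap.mulLeftRight 𝕜 R (Ring.inverse (f x)) (Ring.inverse (f x))).comp f')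
      x := by
  obtain ⟨u, hu⟩ := hx
  have hinv : Ring.inverse (f x) = ↑u⁻¹ := hu ▸ Ring.inverse_unit u
  rw [hinv]
  exact (hu ▸ hasFDerivAt_ringInverse (𝕜 := 𝕜) u).comp x hf

namespace Matrix

variable {n : Type*} [Fintype n] [DecidableEq n]

theorem linfty_opNorm_le_one_of_mem_rowStochastic {M : Matrix n n ℝ}
    (hM : M ∈ rowStochastic ℝ n) : ‖M‖ ≤ 1 := by
  rw [linfty_opNorm_def, NNReal.coe_le_one]
  refine Finset.sup_le fun i _ => ?_
  rw [← NNReal.coe_le_coe]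
  push_cast
  rw [Finset.sum_congr rfl fun j _ => Real.norm_of_nonneg (nonneg_of_mem_rowStochastic hM),
    sum_row_of_mem_rowStochastic hM i]

theorem norm_smul_lt_one_of_mem_rowStochastic {M : Matrix n n ℝ} (hM : M ∈ rowStochastic ℝ n)
    {γ : ℝ} (hγ : |γ| < 1) : ‖γ • M‖ < 1 :=
  calc ‖γ • M‖ ≤ |γ| * ‖M‖ := norm_smul_le γ M
    _ ≤ |γ| :=
      mul_le_of_le_one_right (abs_nonneg γ) (linfty_opNorm_le_one_of_mem_rowStochastic hM)
    _ < 1 := hγ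

end Matrix

section DiscountedVisitation

open Matrix

variable {n : Type*} [Fintype n] [DecidableEq n]

/-- `(1 - γ P)⁻¹ = Σ_t γ^t P^t` when `‖γ P‖ < 1` (otherwise `Ring.inverse` returns `0`). -/
noncomputable def discountedVisitation (γ : ℝ) (P : Matrix n n ℝ) : Matrix n n ℝ :=
  Ring.inverse (1 - γ • P)

variable {γ : ℝ} {P : Matrix n n ℝ}

theorem hasSum_discountedVisitation_apply (h : ‖γ • P‖ < 1) (i j : n) :
    HasSum (fun t : ℕ => γ ^ t * (P ^ t) i j) (discountedVisitation γ P i j) := by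
  simpa [smul_pow, discountedVisitation] using
    (hasSum_geom_series_inverse (γ • P) h).mapL (entryLinearMap ℝ ℝ i j).toContinuousLinearMap

theorem hasSum_discountedVisitation_mulVec (h : ‖γ • P‖ < 1) (v : n → ℝ) (i : n) :
    HasSum (fun t : ℕ => γ ^ t * ∑ j, (P ^ t) i j * v j) ((discountedVisitation γ P *ᵥ v) i) := by
  simpa [Finset.mul_sum, mul_assoc, mulVec, dotProduct] using
    hasSum_sum fun j _ => (hasSum_discountedVisitation_apply h i j).mul_right (v j)

theorem discountedVisitation_mulVec_eq (h : ‖γ • P‖ < 1) {v V : n → ℝ}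
    (hV : V = v + γ • P *ᵥ V) : discountedVisitation γ P *ᵥ v = V := by
  have hv : (1 - γ • P) *ᵥ V = v := by
    rw [sub_mulVec, one_mulVec, smul_mulVec, sub_eq_iff_eq_add, ← hV]
  rw [← hv, mulVec_mulVec, discountedVisitation,
    Ring.inverse_mul_cancel _ (isUnit_one_sub_of_norm_lt_one h), one_mulVec]

theorem HasFDerivAt.discountedVisitation {E : Type*} [NormedAddCommGroup E] [NormedSpace ℝ E]
    {P : E → Matrix n n ℝ} {P' : E →L[ℝ] Matrix n n ℝ} {x : E} (hP : HasFDerivAt P P' x)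
    (h : ‖γ • P x‖ < 1) :
    HasFDerivAt (fun y => discountedVisitation γ (P y))
      (γ • (ContinuousLinearMap.mulLeftRight ℝ _ (discountedVisitation γ (P x))
        (discountedVisitation γ (P x))).comp P') x := by
  refine (HasFDerivAt.ringInverse ((hP.const_smul γ).const_sub 1)
    (isUnit_one_sub_of_norm_lt_one h)).congr_fderiv ?_
  ext1 y
  set R := _root_.discountedVisitation γ (P x)
  change -(R * -(γ • P' y) * R) = γ • (R * P' y * R)
  rw [mul_neg, neg_mul, neg_neg, mul_smul_comm, smul_mul_assoc]

end DiscountedVisitation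

section MDP

variable {S A : Type*} [Fintype S] [Fintype A]
  (p : S → A → S → ℝ) (r : S → A → ℝ) (γ : ℝ) (s₀ : S)

/-- A policy table `x s a` stands for `π(a|s)`; the MDP data `P` and `v` are linear in it. -/
noncomputable def transitionMatrix : (S → A → ℝ) →L[ℝ] Matrix S S ℝ :=
  LinearMap.toContinuousLinearMap
    { toFun x := Matrix.of fun s s' => ∑ a, x s a * p s a s'
      map_add' x y := by ext; simp [add_mul, Finset.sum_add_distrib]
      map_smul' c x := by ext; simp [Finset.mul_sum, mul_assoc] }

noncomputable def expectedReward : (S → A → ℝ) →L[ℝ] S → ℝ :=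
  LinearMap.toContinuousLinearMap
    { toFun x s := ∑ a, x s a * r s a
      map_add' x y := by ext; simp [add_mul, Finset.sum_add_distrib]
      map_smul' c x := by ext; simp [Finset.mul_sum, mul_assoc] }

def actionValue (V : S → ℝ) (s : S) (a : A) : ℝ :=
  r s a + γ * ∑ s', p s a s' * V s'

noncomputable def discountedReturn [DecidableEq S] (x : S → A → ℝ) : ℝ :=
  (discountedVisitation γ (transitionMatrix p x) *ᵥ expectedReward r x) s₀

variable {p r γ}

theorem transitionMatrix_apply (x : S → A → ℝ) (s s' : S) :
    transitionMatrix p x s s' = ∑ a, x s a * p s a s' := rfl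

theorem expectedReward_apply (x : S → A → ℝ) (s : S) :
    expectedReward r x s = ∑ a, x s a * r s a := rfl

theorem transitionMatrix_mem_rowStochastic [DecidableEq S] (hp0 : ∀ s a s', 0 ≤ p s a s')
    (hp1 : ∀ s a, ∑ s', p s a s' = 1) {x : S → A → ℝ} (hx0 : ∀ s a, 0 ≤ x s a)
    (hx1 : ∀ s, ∑ a, x s a = 1) : transitionMatrix p x ∈ Matrix.rowStochastic ℝ S := by
  refine Matrix.mem_rowStochastic_iff_sum.2 ⟨fun s s' => ?_, fun s => ?_⟩
  · exact Finset.sum_nonneg fun a _ => mul_nonneg (hx0 s a) (hp0 s a s')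
  · simp only [transitionMatrix_apply]
    rw [Finset.sum_comm]
    simp [← Finset.mul_sum, hp1, hx1]

theorem sum_mul_actionValue (x : S → A → ℝ) (V : S → ℝ) (s : S) :
    ∑ a, x s a * actionValue p r γ V s a =
      (expectedReward r x + γ • transitionMatrix p x *ᵥ V) s := by
  simp only [actionValue, mul_add, Finset.sum_add_distrib, Pi.add_apply, Pi.smul_apply,
    expectedReward_apply, Matrix.mulVec, dotProduct, transitionMatrix_apply, smul_eq_mul,
    Finset.mul_sum, Finset.sum_mul]
  rw [Finset.sum_comm (f := fun s' a => _)]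
  congr 1
  refine Finset.sum_congr rfl fun a _ => Finset.sum_congr rfl fun s' _ => by ring

variable [DecidableEq S] {s₀}

theorem hasFDerivAt_discountedReturn {x : S → A → ℝ} (h : ‖γ • transitionMatrix p x‖ < 1)
    {V : S → ℝ} (hV : V = expectedReward r x + γ • transitionMatrix p x *ᵥ V) :
    HasFDerivAt (discountedReturn p r γ s₀)
      (∑ s, discountedVisitation γ (transitionMatrix p x) s₀ s •
        ∑ a, actionValue p r γ V s a •
          (ContinuousLinearMap.proj (R := ℝ) (φ := fun _ : A => ℝ) a).comp
            (ContinuousLinearMap.proj s)) x := by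
  set R := discountedVisitation γ (transitionMatrix p x)
  have hRv : R *ᵥ expectedReward r x = V := discountedVisitation_mulVec_eq h hV
  have hR := (transitionMatrix p).hasFDerivAt.discountedVisitation h
  have hentry (s : S) :=
    (Matrix.entryLinearMap ℝ ℝ s₀ s).toContinuousLinearMap.hasFDerivAt.comp x hR
  have hreward (s : S) :=
    (ContinuousLinearMap.proj s).hasFDerivAt.comp x (expectedReward r).hasFDerivAt
  refine (HasFDerivAt.fun_sum fun s _ => (hentry s).mul (hreward s)).congr_fderiv ?_
  ext1 y
  simp only [LinearMap.coe_toContinuousLinearMap', Function.comp_apply,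
    Matrix.entryLinearMap_apply, ContinuousLinearMap.proj_apply, sum_apply, add_apply, smul_apply,
    ContinuousLinearMap.comp_apply, smul_eq_mul]
  change ∑ s, (R s₀ s * expectedReward r y s +
      expectedReward r x s * (γ * (R * transitionMatrix p y * R) s₀ s)) = _
  calc _ = (R *ᵥ expectedReward r y) s₀ +
        γ * ((R * transitionMatrix p y * R) *ᵥ expectedReward r x) s₀ := by
        simp only [Matrix.mulVec, dotProduct, Finset.sum_add_distrib, Finset.mul_sum]
        congr 1
        exact Finset.sum_congr rfl fun s _ => by ring
    _ = (R *ᵥ (expectedReward r y + γ • transitionMatrix p y *ᵥ V)) s₀ := by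
        rw [← hRv, Matrix.mulVec_add, Matrix.mulVec_smul, Matrix.mulVec_mulVec,
          Matrix.mulVec_mulVec]
        rfl
    _ = _ := by simp only [Matrix.mulVec, dotProduct, ← sum_mul_actionValue, mul_comm (y _ _)]

end MDP

theorem policy_gradient_theorem_general
    {S A : Type*} [Fintype S] [DecidableEq S] [Fintype A]
    {n : ℕ}
    (p : S → A → S → ℝ) (hp0 : ∀ s a s', 0 ≤ p s a s') (hp1 : ∀ s a, ∑ s', p s a s' = 1)
    (r : S → A → ℝ) (γ : ℝ) (hγ : γ ∈ Set.Ioo (0 : ℝ) 1) (s₀ : S)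
    (π : (Fin n → ℝ) → S → A → ℝ)
    (hπ0 : ∀ θ s a, 0 ≤ π θ s a) (hπ1 : ∀ θ s, ∑ a, π θ s a = 1)
    (hπC : ∀ s a, ContDiff ℝ 1 (fun θ => π θ s a))
    (Pmat : (Fin n → ℝ) → Matrix S S ℝ)
    (hPmat : ∀ θ s s', Pmat θ s s' = ∑ a, π θ s a * p s a s')
    (Q : (Fin n → ℝ) → S → A → ℝ)
    (hQ : ∀ θ s a, Q θ s a = r s a + γ * ∑ s', p s a s' * ∑ a', π θ s' a' * Q θ s' a')
    (J : (Fin n → ℝ) → ℝ)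
    (hJ : ∀ θ, J θ = ∑' t : ℕ, γ ^ t * ∑ s, ((Pmat θ) ^ t) s₀ s * ∑ a, π θ s a * r s a)
    (η : (Fin n → ℝ) → S → ℝ)
    (hη : ∀ θ s, η θ s = ∑' t : ℕ, γ ^ t * ((Pmat θ) ^ t) s₀ s)
    (θ : Fin n → ℝ) :
    HasFDerivAt J
      (∑ s, η θ s • ∑ a, Q θ s a • fderiv ℝ (fun θ' => π θ' s a) θ) θ := by
  have hPmat' : Pmat = fun θ => transitionMatrix p (π θ) := funext fun θ => Matrix.ext (hPmat θ)
  have hγP (θ : Fin n → ℝ) : ‖γ • transitionMatrix p (π θ)‖ < 1 :=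
    Matrix.norm_smul_lt_one_of_mem_rowStochastic
      (transitionMatrix_mem_rowStochastic hp0 hp1 (hπ0 θ) (hπ1 θ))
      (abs_lt.2 ⟨by linarith [hγ.1], hγ.2⟩)
  have hJ' : J = fun θ => discountedReturn p r γ s₀ (π θ) := funext fun θ => by
    rw [hJ, hPmat']
    exact (hasSum_discountedVisitation_mulVec (hγP θ) _ s₀).tsum_eq
  have hη' (s : S) : η θ s = discountedVisitation γ (transitionMatrix p (π θ)) s₀ s := by
    rw [hη, hPmat']
    exact (hasSum_discountedVisitation_apply (hγP θ) s₀ s).tsum_eq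
  set V : S → ℝ := fun s => ∑ a, π θ s a * Q θ s a
  have hQ' : Q θ = actionValue p r γ V := funext₂ (hQ θ)
  have hV : V = expectedReward r (π θ) + γ • transitionMatrix p (π θ) *ᵥ V := by
    ext s
    rw [← sum_mul_actionValue, ← hQ']
  have hπ : HasFDerivAt π (ContinuousLinearMap.pi fun s => ContinuousLinearMap.pi fun a =>
      fderiv ℝ (fun θ' => π θ' s a) θ) θ :=
    hasFDerivAt_pi.2 fun s => hasFDerivAt_pi.2 fun a =>
      ((hπC s a).differentiable one_ne_zero θ).hasFDerivAt
  rw [hJ']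
  refine ((hasFDerivAt_discountedReturn (hγP θ) hV).comp θ hπ).congr_fderiv ?_
  ext1 h
  simp only [ContinuousLinearMap.comp_apply, ContinuousLinearMap.coe_pi', sum_apply,
    smul_apply, ContinuousLinearMap.proj_apply, smul_eq_mul, hη', hQ']

/-- Policy Gradient Theorem, discounted finite MDP:
In a finite discounted MDP with a parameterized policy `π_θ(a|s)` that is
continuously differentiable in `θ ∈ ℝⁿ`, the objective `J` is differentiable and
`∇_θ J(θ) = Σ_s η_θ(s) Σ_a ∇_θ π_θ(a|s) · Q_θ(s,a)`,
where `η_θ(s) = Σ_t γ^t (P_θ^t)(s₀,s)` is the discounted visitation measure of the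
policy-induced state chain `P_θ`. -/
theorem policy_gradient_theorem
    {S A : Type*} [Fintype S] [DecidableEq S] [Nonempty S] [Fintype A] [Nonempty A]
    {n : ℕ}
    (p : S → A → S → ℝ) (hp0 : ∀ s a s', 0 ≤ p s a s') (hp1 : ∀ s a, ∑ s', p s a s' = 1)
    (r : S → A → ℝ) (γ : ℝ) (hγ : γ ∈ Set.Ioo (0 : ℝ) 1) (s₀ : S)
    (π : (Fin n → ℝ) → S → A → ℝ)
    (hπ0 : ∀ θ s a, 0 ≤ π θ s a) (hπ1 : ∀ θ s, ∑ a, π θ s a = 1)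
    (hπC : ∀ s a, ContDiff ℝ 1 (fun θ => π θ s a))
    (Pmat : (Fin n → ℝ) → Matrix S S ℝ)
    (hPmat : ∀ θ s s', Pmat θ s s' = ∑ a, π θ s a * p s a s')
    (Q : (Fin n → ℝ) → S → A → ℝ)
    (hQ : ∀ θ s a, Q θ s a = r s a + γ * ∑ s', p s a s' * ∑ a', π θ s' a' * Q θ s' a')
    (J : (Fin n → ℝ) → ℝ)
    (hJ : ∀ θ, J θ = ∑' t : ℕ, γ ^ t * ∑ s, ((Pmat θ) ^ t) s₀ s * ∑ a, π θ s a * r s a)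
    (η : (Fin n → ℝ) → S → ℝ)
    (hη : ∀ θ s, η θ s = ∑' t : ℕ, γ ^ t * ((Pmat θ) ^ t) s₀ s)
    (θ : Fin n → ℝ) :
    HasFDerivAt J
      (∑ s, η θ s • ∑ a, Q θ s a • fderiv ℝ (fun θ' => π θ' s a) θ) θ :=
  policy_gradient_theorem_general p hp0 hp1 r γ hγ s₀ π hπ0 hπ1 hπC Pmat hPmat Q hQ J hJ η hη θ
end

section
/- (Lemma 4.2, advantage form of the policy gradient) In a finite discounted MDP with a parameterized policy whose entries π_θ(a|s) are continuously differentiable in θ ∈ ℝⁿ, let ν_θ(s) := (1−γ)·η_θ(s), where η_θ(s) := Σ_{t=0}^∞ γ^t (P_θ^t)(s₀,s), and let Adv_θ(s,a) := Q_θ(s,a) − Σ_{a'} π_θ(a'|s) Q_θ(s,a'). Then ∇_θ J(θ) = (1/(1−γ)) · Σ_{s∈S} ν_θ(s) Σ_{a∈A} ∇_θ π_θ(a|s) · Adv_θ(s,a); in particular ∇_θ J(θ) is proportional to Σ_{s} ν_θ(s) Σ_{a} ∇_θπ_θ(a|s) Adv_θ(s,a) with proportionality constant 1/(1−γ). -/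
/-!
Writing `ρ_θ(s) = Σ_a π_θ(a|s) r(s,a)` and `B_θ = (1 - γ P_θ)⁻¹ = Σ_t γ^t P_θ^t`, the objective is
`J(θ) = (B_θ ρ_θ)(s₀)` and `η_θ(s) = B_θ(s₀,s)`. Differentiating the inverse gives
`dB = γ B (dP) B`, so `∇J = Σ_s η(s) (∇ρ(s) + γ Σ_{s'} ∇P(s,s') V(s'))` with `V = B ρ`, which by the
Bellman equation is the state value `V(s) = Σ_a π(a|s) Q(s,a)`. Expanding `ρ` and `P` in the policy,
the bracket is `Σ_a ∇π(a|s) Q(s,a)`, and since `Σ_a ∇π(a|s) = ∇1 = 0` the baseline `V(s)` can be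
subtracted from `Q(s,a)`, which turns `Q` into the advantage.
-/

open Finset Ring

theorem sum_fderiv_eq_zero_of_sum_eq_const {ι E : Type*} [Fintype ι] [NormedAddCommGroup E]
    [NormedSpace ℝ E] {f : ι → E → ℝ} {θ : E} (hf : ∀ i, DifferentiableAt ℝ (f i) θ) {c : ℝ}
    (hsum : ∀ θ, ∑ i, f i θ = c) : ∑ i, fderiv ℝ (f i) θ = 0 := by
  rw [← fderiv_fun_sum fun i _ => hf i, funext hsum, fderiv_const_apply]

namespace Matrix

variable {S : Type*} [Fintype S] [DecidableEq S]

section LinftyOp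

attribute [local instance] Matrix.linftyOpNormedRing Matrix.linftyOpNormedAlgebra

theorem linfty_opNorm_le_one_of_mem_rowStochastic_s4 {P : Matrix S S ℝ}
    (hP : P ∈ rowStochastic ℝ S) : ‖P‖ ≤ 1 := by
  rw [linfty_opNorm_def, NNReal.coe_le_one]
  refine Finset.sup_le fun i _ => le_of_eq ?_
  rw [← NNReal.coe_inj]
  push_cast
  rw [← sum_row_of_mem_rowStochastic hP i]
  exact sum_congr rfl fun j _ => Real.norm_of_nonneg (nonneg_of_mem_rowStochastic hP)

theorem norm_smul_lt_one_of_mem_rowStochastic_s4 {P : Matrix S S ℝ} (hP : P ∈ rowStochastic ℝ S)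
    {γ : ℝ} (hγ0 : 0 ≤ γ) (hγ1 : γ < 1) : ‖γ • P‖ < 1 := by
  rw [norm_smul, Real.norm_of_nonneg hγ0]
  nlinarith [linfty_opNorm_le_one_of_mem_rowStochastic_s4 hP, norm_nonneg P]

theorem isUnit_one_sub_smul_of_mem_rowStochastic {P : Matrix S S ℝ}
    (hP : P ∈ rowStochastic ℝ S) {γ : ℝ} (hγ0 : 0 ≤ γ) (hγ1 : γ < 1) :
    IsUnit (1 - γ • P) :=
  isUnit_one_sub_of_norm_lt_one (norm_smul_lt_one_of_mem_rowStochastic_s4 hP hγ0 hγ1)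

theorem hasSum_pow_apply_of_mem_rowStochastic {P : Matrix S S ℝ}
    (hP : P ∈ rowStochastic ℝ S) {γ : ℝ} (hγ0 : 0 ≤ γ) (hγ1 : γ < 1) (i j : S) :
    HasSum (fun t : ℕ => γ ^ t * (P ^ t) i j) ((1 - γ • P)⁻¹ʳ i j) := by
  have h := (entryLinearMap ℝ ℝ i j).toContinuousLinearMap.hasSum
    (hasSum_geom_series_inverse _ (norm_smul_lt_one_of_mem_rowStochastic_s4 hP hγ0 hγ1))
  simpa [smul_pow] using h

variable {E : Type*} [NormedAddCommGroup E] [NormedSpace ℝ E]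

theorem hasFDerivAt_ringInverse_apply {M : E → Matrix S S ℝ} {M' : S → S → E →L[ℝ] ℝ}
    {θ : E} (hM : ∀ i j, HasFDerivAt (fun θ => M θ i j) (M' i j) θ) (hu : IsUnit (M θ))
    (i j : S) :
    HasFDerivAt (fun θ => (M θ)⁻¹ʳ i j)
      (-∑ k, ∑ l, ((M θ)⁻¹ʳ i k * (M θ)⁻¹ʳ l j) • M' k l) θ := by
  -- `hasFDerivAt_pi` describes derivatives for the sup norm on `S → S → ℝ`, while
  -- `hasFDerivAt_ringInverse` needs the submultiplicative norm; `e` is the identity between them.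
  let e : (S → S → ℝ) ≃L[ℝ] Matrix S S ℝ :=
    (LinearEquiv.refl ℝ (S → S → ℝ)).toContinuousLinearEquiv
  have hMat : HasFDerivAt M
      (e.toContinuousLinearMap.comp (.pi fun i => .pi fun j => M' i j)) θ :=
    e.hasFDerivAt.comp θ (hasFDerivAt_pi.2 fun i => hasFDerivAt_pi.2 fun j => hM i j)
  obtain ⟨u, hu⟩ := hu
  have hinv := (hu ▸ hasFDerivAt_ringInverse (𝕜 := ℝ) u).comp θ hMat
  have hentry := (entryLinearMap ℝ ℝ i j).toContinuousLinearMap.hasFDerivAt.comp θ hinv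
  rw [← hu, Ring.inverse_unit u]
  refine hentry.congr_fderiv ?_
  ext v
  change -(((u⁻¹ : (Matrix S S ℝ)ˣ) * of (fun k l => M' k l v) * (u⁻¹ : (Matrix S S ℝ)ˣ)) i j) = _
  simp only [coe_units_inv, mul_apply, of_apply, sum_mul, _root_.neg_apply, _root_.sum_apply,
    _root_.smul_apply, smul_eq_mul, neg_inj]
  rw [sum_comm]
  exact sum_congr rfl fun k _ => sum_congr rfl fun l _ => mul_right_comm ..

end LinftyOp

theorem hasSum_pow_mulVec_apply_of_mem_rowStochastic {P : Matrix S S ℝ}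
    (hP : P ∈ rowStochastic ℝ S) {γ : ℝ} (hγ0 : 0 ≤ γ) (hγ1 : γ < 1) (v : S → ℝ) (i : S) :
    HasSum (fun t : ℕ => γ ^ t * (P ^ t *ᵥ v) i) (((1 - γ • P)⁻¹ʳ *ᵥ v) i) := by
  simp only [mulVec, dotProduct, mul_sum, ← mul_assoc]
  exact hasSum_sum fun j _ => (hasSum_pow_apply_of_mem_rowStochastic hP hγ0 hγ1 i j).mul_right _

theorem hasFDerivAt_ringInverse_one_sub_smul_mulVec_apply {E : Type*} [NormedAddCommGroup E]
    [NormedSpace ℝ E] {P : E → Matrix S S ℝ} {ρ : E → S → ℝ} {P' : S → S → E →L[ℝ] ℝ}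
    {ρ' : S → E →L[ℝ] ℝ} {θ : E} {γ : ℝ}
    (hP : ∀ i j, HasFDerivAt (fun θ => P θ i j) (P' i j) θ)
    (hρ : ∀ i, HasFDerivAt (fun θ => ρ θ i) (ρ' i) θ) (hu : IsUnit (1 - γ • P θ)) (i : S) :
    HasFDerivAt (fun θ => ((1 - γ • P θ)⁻¹ʳ *ᵥ ρ θ) i)
      (∑ j, (1 - γ • P θ)⁻¹ʳ i j •
        (ρ' j + γ • ∑ k, ((1 - γ • P θ)⁻¹ʳ *ᵥ ρ θ) k • P' j k)) θ := by
  have hM (j k : S) : HasFDerivAt (fun θ => (1 - γ • P θ) j k) (-(γ • P' j k)) θ :=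
    ((hasFDerivAt_const _ θ).fun_sub ((hP j k).const_mul γ)).congr_fderiv (zero_sub _)
  have hB := hasFDerivAt_ringInverse_apply hM hu i
  refine (HasFDerivAt.fun_sum fun j _ => (hB j).mul (hρ j)).congr_fderiv ?_
  ext v
  simp only [mulVec, dotProduct, _root_.sum_apply, _root_.add_apply, _root_.smul_apply,
    _root_.neg_apply, smul_eq_mul, mul_add, sum_add_distrib, mul_sum, sum_mul, mul_neg, neg_neg,
    sum_neg_distrib]
  congr 1
  rw [sum_comm]
  refine sum_congr rfl fun k _ => ?_
  rw [sum_comm]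
  exact sum_congr rfl fun l _ => sum_congr rfl fun j _ => by ring

end Matrix

open Matrix

section MDP

variable {S A : Type*} [Fintype S] [Fintype A]

theorem one_sub_smul_mulVec_stateValue [DecidableEq S] {p : S → A → S → ℝ} {r : S → A → ℝ}
    {γ : ℝ} {π Q : S → A → ℝ} {P : Matrix S S ℝ} (hP : ∀ s s', P s s' = ∑ a, π s a * p s a s')
    (hQ : ∀ s a, Q s a = r s a + γ * ∑ s', p s a s' * ∑ a', π s' a' * Q s' a') :
    (1 - γ • P) *ᵥ (fun s => ∑ a, π s a * Q s a) = fun s => ∑ a, π s a * r s a := by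
  funext s
  have hPV : (P *ᵥ fun s => ∑ a, π s a * Q s a) s
      = ∑ a, π s a * ∑ s', p s a s' * ∑ a', π s' a' * Q s' a' := by
    simp only [mulVec, dotProduct, hP, sum_mul]
    rw [sum_comm]
    refine sum_congr rfl fun a _ => ?_
    rw [mul_sum]
    exact sum_congr rfl fun s' _ => mul_assoc ..
  rw [sub_mulVec, one_mulVec, smul_mulVec, Pi.sub_apply, Pi.smul_apply, hPV, smul_eq_mul,
    mul_sum, ← sum_sub_distrib]
  exact sum_congr rfl fun a _ => by rw [hQ]; ring

theorem sum_smul_eq_of_bellman {R M : Type*} [CommRing R] [AddCommGroup M] [Module R M]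
    {Q r : A → R} {p : A → S → R} {V : S → R} {γ : R}
    (hQ : ∀ a, Q a = r a + γ * ∑ s', p a s' * V s') (D : A → M) :
    ∑ a, r a • D a + γ • ∑ s', V s' • ∑ a, p a s' • D a = ∑ a, Q a • D a := by
  simp only [hQ, add_smul, sum_add_distrib, mul_sum, sum_smul, smul_sum, smul_smul]
  rw [sum_comm (s := univ (α := S))]
  exact congrArg _ (sum_congr rfl fun a _ => sum_congr rfl fun s' _ => by ring_nf)

theorem mem_rowStochastic_of_policy [DecidableEq S] {p : S → A → S → ℝ} {π : S → A → ℝ}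
    {P : Matrix S S ℝ} (hP : ∀ s s', P s s' = ∑ a, π s a * p s a s')
    (hp0 : ∀ s a s', 0 ≤ p s a s') (hp1 : ∀ s a, ∑ s', p s a s' = 1)
    (hπ0 : ∀ s a, 0 ≤ π s a) (hπ1 : ∀ s, ∑ a, π s a = 1) : P ∈ rowStochastic ℝ S := by
  refine mem_rowStochastic_iff_sum.2 ⟨fun s s' => ?_, fun s => ?_⟩
  · rw [hP]
    exact sum_nonneg fun a _ => mul_nonneg (hπ0 s a) (hp0 s a s')
  · simp only [hP, sum_comm (γ := S), ← mul_sum, hp1, mul_one, hπ1]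

theorem hasFDerivAt_policyValue_apply [DecidableEq S] {E : Type*} [NormedAddCommGroup E]
    [NormedSpace ℝ E] {p : S → A → S → ℝ} {r : S → A → ℝ} {γ : ℝ} {π : E → S → A → ℝ}
    {Q : S → A → ℝ} {P : E → Matrix S S ℝ} {θ : E}
    (hπ : ∀ s a, DifferentiableAt ℝ (fun θ => π θ s a) θ)
    (hP : ∀ θ s s', P θ s s' = ∑ a, π θ s a * p s a s')
    (hQ : ∀ s a, Q s a = r s a + γ * ∑ s', p s a s' * ∑ a', π θ s' a' * Q s' a')
    (hu : IsUnit (1 - γ • P θ)) (s₀ : S) :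
    HasFDerivAt (fun θ => ((1 - γ • P θ)⁻¹ʳ *ᵥ fun s => ∑ a, π θ s a * r s a) s₀)
      (∑ s, (1 - γ • P θ)⁻¹ʳ s₀ s • ∑ a, Q s a • fderiv ℝ (fun θ => π θ s a) θ) θ := by
  have hP' (s s' : S) : HasFDerivAt (fun θ => P θ s s')
      (∑ a, p s a s' • fderiv ℝ (fun θ => π θ s a) θ) θ := by
    simp only [hP]
    exact HasFDerivAt.fun_sum fun a _ => (hπ s a).hasFDerivAt.mul_const _
  have hρ' (s : S) : HasFDerivAt (fun θ => ∑ a, π θ s a * r s a)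
      (∑ a, r s a • fderiv ℝ (fun θ => π θ s a) θ) θ :=
    HasFDerivAt.fun_sum fun a _ => (hπ s a).hasFDerivAt.mul_const _
  have hV : (1 - γ • P θ)⁻¹ʳ *ᵥ (fun s => ∑ a, π θ s a * r s a)
      = fun s => ∑ a, π θ s a * Q s a := by
    rw [← one_sub_smul_mulVec_stateValue (hP θ) hQ, mulVec_mulVec,
      Ring.inverse_mul_cancel _ hu, one_mulVec]
  refine (hasFDerivAt_ringInverse_one_sub_smul_mulVec_apply
    (ρ := fun θ s => ∑ a, π θ s a * r s a) hP' hρ' hu s₀).congr_fderiv ?_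
  rw [hV]
  exact sum_congr rfl fun s _ => congrArg _ (sum_smul_eq_of_bellman (hQ s) _)

end MDP

theorem policy_gradient_advantage_form_general
    {S A : Type*} [Fintype S] [DecidableEq S] [Fintype A]
    {n : ℕ}
    (p : S → A → S → ℝ) (hp0 : ∀ s a s', 0 ≤ p s a s') (hp1 : ∀ s a, ∑ s', p s a s' = 1)
    (r : S → A → ℝ) (γ : ℝ) (hγ : γ ∈ Set.Ioo (0 : ℝ) 1) (s₀ : S)
    (π : (Fin n → ℝ) → S → A → ℝ)
    (hπ0 : ∀ θ s a, 0 ≤ π θ s a) (hπ1 : ∀ θ s, ∑ a, π θ s a = 1)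
    (hπC : ∀ s a, ContDiff ℝ 1 (fun θ => π θ s a))
    (Pmat : (Fin n → ℝ) → Matrix S S ℝ)
    (hPmat : ∀ θ s s', Pmat θ s s' = ∑ a, π θ s a * p s a s')
    (Q : (Fin n → ℝ) → S → A → ℝ)
    (hQ : ∀ θ s a, Q θ s a = r s a + γ * ∑ s', p s a s' * ∑ a', π θ s' a' * Q θ s' a')
    (J : (Fin n → ℝ) → ℝ)
    (hJ : ∀ θ, J θ = ∑' t : ℕ, γ ^ t * ∑ s, ((Pmat θ) ^ t) s₀ s * ∑ a, π θ s a * r s a)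
    (η : (Fin n → ℝ) → S → ℝ)
    (hη : ∀ θ s, η θ s = ∑' t : ℕ, γ ^ t * ((Pmat θ) ^ t) s₀ s)
    (ν : (Fin n → ℝ) → S → ℝ) (hν : ∀ θ s, ν θ s = (1 - γ) * η θ s)
    (Adv : (Fin n → ℝ) → S → A → ℝ)
    (hAdv : ∀ θ s a, Adv θ s a = Q θ s a - ∑ a', π θ s a' * Q θ s a')
    (θ : Fin n → ℝ) :
    HasFDerivAt J
      ((1 / (1 - γ)) •
        ∑ s, ν θ s • ∑ a, Adv θ s a • fderiv ℝ (fun θ' => π θ' s a) θ) θ := by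
  obtain ⟨hγ0, hγ1⟩ := hγ
  have hstoch (θ : Fin n → ℝ) : Pmat θ ∈ rowStochastic ℝ S :=
    mem_rowStochastic_of_policy (hPmat θ) hp0 hp1 (hπ0 θ) (hπ1 θ)
  have hπ (s : S) (a : A) : DifferentiableAt ℝ (fun θ => π θ s a) θ :=
    (hπC s a).differentiable one_ne_zero θ
  have hJ' : J = fun θ => ((1 - γ • Pmat θ)⁻¹ʳ *ᵥ fun s => ∑ a, π θ s a * r s a) s₀ :=
    funext fun θ => (hJ θ).trans
      (hasSum_pow_mulVec_apply_of_mem_rowStochastic (hstoch θ) hγ0.le hγ1 _ s₀).tsum_eq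
  rw [hJ']
  refine (hasFDerivAt_policyValue_apply hπ hPmat (hQ θ)
    (isUnit_one_sub_smul_of_mem_rowStochastic (hstoch θ) hγ0.le hγ1) s₀).congr_fderiv ?_
  rw [smul_sum]
  refine sum_congr rfl fun s _ => ?_
  rw [hν, hη, (hasSum_pow_apply_of_mem_rowStochastic (hstoch θ) hγ0.le hγ1 s₀ s).tsum_eq,
    smul_smul, one_div, inv_mul_cancel_left₀ (sub_ne_zero.2 hγ1.ne')]
  have hbaseline : ∑ a, (∑ a', π θ s a' * Q θ s a') • fderiv ℝ (fun θ => π θ s a) θ = 0 := by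
    rw [← smul_sum, sum_fderiv_eq_zero_of_sum_eq_const (hπ s) (fun θ => hπ1 θ s), smul_zero]
  rw [← sub_zero (∑ a, Q θ s a • fderiv ℝ (fun θ => π θ s a) θ), ← hbaseline, ← sum_sub_distrib]
  exact congrArg _ (sum_congr rfl fun a _ => by rw [hAdv]; exact (sub_smul ..).symm)

/-- Lemma 4.2, advantage form of the policy gradient:
With `ν_θ(s) = (1-γ) η_θ(s)` and `Adv_θ(s,a) = Q_θ(s,a) - Σ_{a'} π_θ(a'|s) Q_θ(s,a')`,
`∇_θ J(θ) = (1/(1-γ)) Σ_s ν_θ(s) Σ_a ∇_θ π_θ(a|s) · Adv_θ(s,a)`. -/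
theorem policy_gradient_advantage_form
    {S A : Type*} [Fintype S] [DecidableEq S] [Nonempty S] [Fintype A] [Nonempty A]
    {n : ℕ}
    (p : S → A → S → ℝ) (hp0 : ∀ s a s', 0 ≤ p s a s') (hp1 : ∀ s a, ∑ s', p s a s' = 1)
    (r : S → A → ℝ) (γ : ℝ) (hγ : γ ∈ Set.Ioo (0 : ℝ) 1) (s₀ : S)
    (π : (Fin n → ℝ) → S → A → ℝ)
    (hπ0 : ∀ θ s a, 0 ≤ π θ s a) (hπ1 : ∀ θ s, ∑ a, π θ s a = 1)
    (hπC : ∀ s a, ContDiff ℝ 1 (fun θ => π θ s a))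
    (Pmat : (Fin n → ℝ) → Matrix S S ℝ)
    (hPmat : ∀ θ s s', Pmat θ s s' = ∑ a, π θ s a * p s a s')
    (Q : (Fin n → ℝ) → S → A → ℝ)
    (hQ : ∀ θ s a, Q θ s a = r s a + γ * ∑ s', p s a s' * ∑ a', π θ s' a' * Q θ s' a')
    (J : (Fin n → ℝ) → ℝ)
    (hJ : ∀ θ, J θ = ∑' t : ℕ, γ ^ t * ∑ s, ((Pmat θ) ^ t) s₀ s * ∑ a, π θ s a * r s a)
    (η : (Fin n → ℝ) → S → ℝ)
    (hη : ∀ θ s, η θ s = ∑' t : ℕ, γ ^ t * ((Pmat θ) ^ t) s₀ s)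
    (ν : (Fin n → ℝ) → S → ℝ) (hν : ∀ θ s, ν θ s = (1 - γ) * η θ s)
    (Adv : (Fin n → ℝ) → S → A → ℝ)
    (hAdv : ∀ θ s a, Adv θ s a = Q θ s a - ∑ a', π θ s a' * Q θ s a')
    (θ : Fin n → ℝ) :
    HasFDerivAt J
      ((1 / (1 - γ)) •
        ∑ s, ν θ s • ∑ a, Adv θ s a • fderiv ℝ (fun θ' => π θ' s a) θ) θ :=
  policy_gradient_advantage_form_general p hp0 hp1 r γ hγ s₀ π hπ0 hπ1 hπC Pmat hPmat Q hQ J hJ η hη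
    ν hν Adv hAdv θ
end

section
/- Let E be a real inner product space, g, d ∈ E with d ≠ 0, and set e := d − g. Then ⟨g, d⟩ / ‖d‖ ≥ (1/3)·‖g‖ − (8/3)·‖e‖. -/
open scoped RealInnerProductSpace

/-! Writing `g = d - e`, Cauchy–Schwarz gives `⟪g, d⟫ / ‖d‖ ≥ ‖d‖ - ‖e‖ ≥ ‖g‖ - 2‖e‖`,
which is stronger than the claimed bound. -/

section

variable {E : Type*} [NormedAddCommGroup E] [InnerProductSpace ℝ E]

theorem norm_sub_norm_sub_le_inner_div_norm (g d : E) :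
    ‖d‖ - ‖d - g‖ ≤ ⟪g, d⟫ / ‖d‖ := by
  rcases eq_or_ne d 0 with rfl | hd
  · simp
  have hpos : 0 < ‖d‖ := norm_pos_iff.mpr hd
  have hsplit : ⟪g, d⟫ = ‖d‖ ^ 2 - ⟪d - g, d⟫ := by
    rw [inner_sub_left, real_inner_self_eq_norm_sq]; ring
  rw [le_div_iff₀ hpos, hsplit]
  nlinarith [real_inner_le_norm (d - g) d]

theorem norm_sub_two_mul_norm_sub_le_inner_div_norm (g d : E) :
    ‖g‖ - 2 * ‖d - g‖ ≤ ⟪g, d⟫ / ‖d‖ := by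
  have hg : ‖g‖ - ‖d - g‖ ≤ ‖d‖ := by
    linarith [norm_sub_norm_le g d, norm_sub_rev g d]
  linarith [norm_sub_norm_sub_le_inner_div_norm g d]

end

theorem inner_div_norm_lower_bound_general
    {E : Type*} [NormedAddCommGroup E] [InnerProductSpace ℝ E]
    (g d : E) (e : E) (he : e = d - g) :
    ⟪g, d⟫ / ‖d‖ ≥ (1 / 3) * ‖g‖ - (8 / 3) * ‖e‖ := by
  subst he
  linarith [norm_sub_two_mul_norm_sub_le_inner_div_norm g d, norm_nonneg g, norm_nonneg (d - g)]

/-- In a real inner product space, for `d ≠ 0` and `e = d - g`,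
`⟨g, d⟩ / ‖d‖ ≥ (1/3)‖g‖ - (8/3)‖e‖`. -/
theorem inner_div_norm_lower_bound
    {E : Type*} [NormedAddCommGroup E] [InnerProductSpace ℝ E]
    (g d : E) (hd : d ≠ 0) (e : E) (he : e = d - g) :
    ⟪g, d⟫ / ‖d‖ ≥ (1 / 3) * ‖g‖ - (8 / 3) * ‖e‖ :=
  inner_div_norm_lower_bound_general g d e he
end

section
/- Let E be a real inner product space, J : E → ℝ, G : E → E, and L > 0 such that the descent inequality J(y) ≥ J(x) + ⟨G(x), y − x⟩ − L·‖y − x‖² holds for all x, y ∈ E. Suppose additionally there are μ > 0, ε' ≥ 0, and J* ∈ ℝ such that √μ·(J* − J(x)) ≤ ε' + ‖G(x)‖ for all x ∈ E. Then for any θ ∈ E, any α > 0, and any d ∈ E with d ≠ 0, the point θ' := θ + α·d/‖d‖ satisfies J* − J(θ') ≤ (1 − α√μ/3)·(J* − J(θ)) + (8α/3)·‖d − G(θ)‖ + L·α² + (α/3)·ε'. -/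
open scoped RealInnerProductSpace

/-!
Write `e = d - G θ`. Cauchy–Schwarz gives `⟪G θ, d⟫ ≥ ‖d‖ (‖d‖ - ‖e‖)`, so the step of length `α`
along `d / ‖d‖` raises `J` by at least `α (‖d‖ - ‖e‖) - L α²`. Gradient domination at `θ`, with
`‖G θ‖ ≤ ‖d‖ + ‖e‖`, bounds `(α √μ / 3) (J* - J θ)` by `(α / 3) (ε' + ‖d‖ + ‖e‖)`, which the
gain `α ‖d‖` absorbs.
-/

section NormalizedStep

variable {E : Type*} [NormedAddCommGroup E] [InnerProductSpace ℝ E]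

theorem norm_div_norm_smul {α : ℝ} (hα : 0 ≤ α) {d : E} (hd : d ≠ 0) :
    ‖(α / ‖d‖) • d‖ = α := by
  simpa [div_eq_mul_inv] using norm_smul_inv_norm' (𝕜 := ℝ) hα hd

theorem norm_mul_sub_norm_sub_le_real_inner (g d : E) :
    ‖d‖ * (‖d‖ - ‖d - g‖) ≤ ⟪g, d⟫ := by
  have hcs : ⟪d - g, d⟫ ≤ ‖d - g‖ * ‖d‖ := real_inner_le_norm _ _
  rw [inner_sub_left, real_inner_self_eq_norm_sq] at hcs
  linarith

theorem le_apply_normalized_step_of_descent {J : E → ℝ} {G : E → E} {L : ℝ}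
    (hdesc : ∀ x y : E, J y ≥ J x + ⟪G x, y - x⟫ - L * ‖y - x‖ ^ 2)
    (θ : E) {α : ℝ} (hα : 0 ≤ α) {d : E} (hd : d ≠ 0) :
    J θ + α * (‖d‖ - ‖d - G θ‖) - L * α ^ 2 ≤ J (θ + (α / ‖d‖) • d) := by
  have hinner : α * (‖d‖ - ‖d - G θ‖) ≤ ⟪G θ, (α / ‖d‖) • d⟫ := by
    rw [real_inner_smul_right, div_mul_eq_mul_div, le_div_iff₀ (norm_pos_iff.mpr hd)]
    linarith [mul_le_mul_of_nonneg_left (norm_mul_sub_norm_sub_le_real_inner (G θ) d) hα]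
  have hstep := hdesc θ (θ + (α / ‖d‖) • d)
  rw [add_sub_cancel_left, norm_div_norm_smul hα hd] at hstep
  linarith

end NormalizedStep

theorem normalized_ascent_one_step_progress_general
    {E : Type*} [NormedAddCommGroup E] [InnerProductSpace ℝ E]
    (J : E → ℝ) (G : E → E) (L : ℝ)
    (hdesc : ∀ x y : E, J y ≥ J x + ⟪G x, y - x⟫ - L * ‖y - x‖ ^ 2)
    (μ : ℝ) (ε' : ℝ) (Jstar : ℝ)
    (hdom : ∀ x : E, Real.sqrt μ * (Jstar - J x) ≤ ε' + ‖G x‖)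
    (θ : E) (α : ℝ) (hα : 0 < α) (d : E) (hd : d ≠ 0) :
    Jstar - J (θ + (α / ‖d‖) • d) ≤
      (1 - α * Real.sqrt μ / 3) * (Jstar - J θ) +
        (8 * α / 3) * ‖d - G θ‖ + L * α ^ 2 + (α / 3) * ε' := by
  have hascent := le_apply_normalized_step_of_descent hdesc θ hα.le hd
  have hdom_d : Real.sqrt μ * (Jstar - J θ) ≤ ε' + ‖d‖ + ‖d - G θ‖ := by
    linarith [hdom θ, norm_le_norm_add_norm_sub d (G θ)]
  linarith [mul_le_mul_of_nonneg_left hdom_d hα.le, mul_nonneg hα.le (norm_nonneg d),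
    mul_nonneg hα.le (norm_nonneg (d - G θ))]

/-- one-step progress of normalized ascent. If `J` satisfies the
descent inequality `J(y) ≥ J(x) + ⟨G(x), y - x⟩ - L‖y - x‖²` and the gradient
domination condition `√μ (J* - J(x)) ≤ ε' + ‖G(x)‖`, then for any `θ`, `α > 0`
and `d ≠ 0`, the point `θ' = θ + α d/‖d‖` satisfies
`J* - J(θ') ≤ (1 - α√μ/3)(J* - J(θ)) + (8α/3)‖d - G(θ)‖ + Lα² + (α/3)ε'`. -/
theorem normalized_ascent_one_step_progress
    {E : Type*} [NormedAddCommGroup E] [InnerProductSpace ℝ E]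
    (J : E → ℝ) (G : E → E) (L : ℝ) (hL : 0 < L)
    (hdesc : ∀ x y : E, J y ≥ J x + ⟪G x, y - x⟫ - L * ‖y - x‖ ^ 2)
    (μ : ℝ) (hμ : 0 < μ) (ε' : ℝ) (hε' : 0 ≤ ε') (Jstar : ℝ)
    (hdom : ∀ x : E, Real.sqrt μ * (Jstar - J x) ≤ ε' + ‖G x‖)
    (θ : E) (α : ℝ) (hα : 0 < α) (d : E) (hd : d ≠ 0) :
    Jstar - J (θ + (α / ‖d‖) • d) ≤
      (1 - α * Real.sqrt μ / 3) * (Jstar - J θ) +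
        (8 * α / 3) * ‖d - G θ‖ + L * α ^ 2 + (α / 3) * ε' :=
  normalized_ascent_one_step_progress_general J G L hdesc μ ε' Jstar hdom θ α hα d hd
end

section
/- Let T ≥ 3 be an integer, and let Δ : ℕ → ℝ and c : ℕ → ℝ be sequences with Δ_t ≥ 0 and c_t ≥ 0 for all t. If Δ_{t+1} ≤ (1 − 7/(6t))·Δ_t + c_t/t for every integer t with 2 ≤ t ≤ T−1, then Δ_T ≤ (Δ_2 + Σ_{τ=2}^{T−1} c_τ) / (T−1). -/
/-!
Multiplying the recursion by `t` and using `7/6 ≥ 1` and `Δ_t ≥ 0` gives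
`t Δ_{t+1} ≤ (t - 1) Δ_t + c_t`: the weighted sequence `(t - 1) Δ_t` grows by at most `c_t` per
step. Telescoping from `t = 2`, where the weight is `1`, bounds `(T - 1) Δ_T`.
-/

open Finset

theorem le_add_sum_Ico_of_le_add {α : Type*} [AddCommGroup α] [PartialOrder α]
    [IsOrderedAddMonoid α] {u c : ℕ → α} {m n : ℕ} (hmn : m ≤ n)
    (h : ∀ t ∈ Ico m n, u (t + 1) ≤ u t + c t) :
    u n ≤ u m + ∑ t ∈ Ico m n, c t := by
  have hsum : u n - u m ≤ ∑ t ∈ Ico m n, c t := by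
    rw [← sum_Ico_sub u hmn]
    exact sum_le_sum fun t ht => sub_le_iff_le_add'.mpr (h t ht)
  exact sub_le_iff_le_add'.mp hsum

theorem mul_le_sub_one_mul_add_of_le_one_sub_div {K : Type*} [Field K] [LinearOrder K]
    [IsStrictOrderedRing K] {x a y z w : K} (hx : 0 < x) (ha : 1 ≤ a) (hy : 0 ≤ y)
    (h : z ≤ (1 - a / x) * y + w / x) :
    x * z ≤ (x - 1) * y + w := by
  calc x * z ≤ x * ((1 - a / x) * y + w / x) := mul_le_mul_of_nonneg_left h hx.le
    _ = (x - a) * y + w := by field_simp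
    _ ≤ (x - 1) * y + w := by gcongr

theorem recursion_convergence_bound_general
    (T : ℕ) (hT : 3 ≤ T) (Δ c : ℕ → ℝ)
    (hΔ0 : ∀ t, 0 ≤ Δ t)
    (hrec : ∀ t : ℕ, 2 ≤ t → t ≤ T - 1 →
      Δ (t + 1) ≤ (1 - 7 / (6 * (t : ℝ))) * Δ t + c t / (t : ℝ)) :
    Δ T ≤ (Δ 2 + ∑ τ ∈ Finset.Icc 2 (T - 1), c τ) / ((T : ℝ) - 1) := by
  have hstep : ∀ t ∈ Ico 2 T,
      ((t + 1 : ℕ) - 1 : ℝ) * Δ (t + 1) ≤ ((t : ℝ) - 1) * Δ t + c t := by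
    intro t ht
    obtain ⟨h2t, htT⟩ := mem_Ico.mp ht
    have hpos : (0 : ℝ) < t := by positivity
    have hrec' : Δ (t + 1) ≤ (1 - (7 / 6) / (t : ℝ)) * Δ t + c t / t := by
      rw [div_div]; exact hrec t h2t (by omega)
    push_cast
    rw [add_sub_cancel_right]
    exact mul_le_sub_one_mul_add_of_le_one_sub_div hpos (by norm_num) (hΔ0 t) hrec'
  have htel := le_add_sum_Ico_of_le_add (u := fun t => ((t : ℝ) - 1) * Δ t) (by omega) hstep
  have hIcc : Icc 2 (T - 1) = Ico 2 T := by
    rw [← Ico_add_one_right_eq_Icc, Nat.sub_add_cancel (by omega)]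
  have hT1 : (0 : ℝ) < (T : ℝ) - 1 := by
    have : (3 : ℝ) ≤ T := by exact_mod_cast hT
    linarith
  rw [le_div_iff₀ hT1, hIcc, mul_comm]
  simpa only [Nat.cast_ofNat, show (2 : ℝ) - 1 = 1 by norm_num, one_mul] using htel

/-- If `Δ` and `c` are nonnegative sequences with
`Δ_{t+1} ≤ (1 - 7/(6t)) Δ_t + c_t / t` for all integers `2 ≤ t ≤ T-1` (`T ≥ 3`),
then `Δ_T ≤ (Δ_2 + Σ_{τ=2}^{T-1} c_τ) / (T-1)`. -/
theorem recursion_convergence_bound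
    (T : ℕ) (hT : 3 ≤ T) (Δ c : ℕ → ℝ)
    (hΔ0 : ∀ t, 0 ≤ Δ t) (hc0 : ∀ t, 0 ≤ c t)
    (hrec : ∀ t : ℕ, 2 ≤ t → t ≤ T - 1 →
      Δ (t + 1) ≤ (1 - 7 / (6 * (t : ℝ))) * Δ t + c t / (t : ℝ)) :
    Δ T ≤ (Δ 2 + ∑ τ ∈ Finset.Icc 2 (T - 1), c τ) / ((T : ℝ) - 1) :=
  recursion_convergence_bound_general T hT Δ c hΔ0 hrec
end

section
/- For every integer t ≥ 2, ∏_{k=2}^{t} (1 − 7/(6k)) ≤ 1/t. -/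
/-! Since `7/6 ≥ 1`, each factor is at most `1 - 1/k = (k - 1)/k`, and it is nonnegative because
`7/6 ≤ 2 ≤ k`; the product of the `(k - 1)/k` telescopes to `1/t`. -/

open Finset

theorem prod_Icc_two_one_sub_inv (t : ℕ) (ht : 1 ≤ t) :
    ∏ k ∈ Icc 2 t, (1 - 1 / (k : ℝ)) = 1 / t := by
  induction t, ht using Nat.le_induction with
  | base => simp
  | succ n hn ih =>
    have hn' : (n : ℝ) ≠ 0 := by positivity
    rw [prod_Icc_succ_top (by omega), ih]
    push_cast
    field_simp
    ring

theorem prod_Icc_two_one_sub_div_le {c : ℝ} (hc₁ : 1 ≤ c) (hc₂ : c ≤ 2) (t : ℕ) (ht : 1 ≤ t) :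
    ∏ k ∈ Icc 2 t, (1 - c / (k : ℝ)) ≤ 1 / t := by
  rw [← prod_Icc_two_one_sub_inv t ht]
  refine prod_le_prod (fun k hk => ?_) (fun k hk => ?_)
  all_goals
    have hk : (2 : ℝ) ≤ k := by exact_mod_cast (mem_Icc.mp hk).1
  · rw [sub_nonneg, div_le_one (by linarith)]
    linarith
  · gcongr

/-- For every integer `t ≥ 2`, `∏_{k=2}^{t} (1 - 7/(6k)) ≤ 1/t`. -/
theorem prod_one_sub_seven_div_six_le
    (t : ℕ) (ht : 2 ≤ t) :
    ∏ k ∈ Finset.Icc 2 t, (1 - 7 / (6 * (k : ℝ))) ≤ 1 / (t : ℝ) := by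
  simp_rw [← div_div]
  exact prod_Icc_two_one_sub_div_le (by norm_num) (by norm_num) t (by omega)
end
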